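/- arXiv:quant-ph/0512015 — 2 statements merged into one kernel-verified Lean document; each statement's English description precedes it below -/
import Mathlib

section
/- Helstrom's theorem: given two density operators ρ and σ with uniform prior (each with probability 1/2), the maximum probability of correctly identifying the state with a two-outcome POVM {Λ, I-Λ} equals 1/2 + (1/4)‖ρ - σ‖₁. -/
open scoped Matrix Kronecker ComplexOrder

noncomputable section

noncomputable def traceNorm {n : Type*} [Fintype n] [DecidableEq n] (A : Matrix n n ℂ) : ℝ :=
  (((Matrix.posSemidef_conjTranspose_mul_self A).1.eigenvectorUnitary.1 *
    Matrix.diagonal (((↑) : ℝ → ℂ) ∘ Real.sqrt ∘ (Matrix.posSemidef_conjTranspose_mul_self A).1.eigenvalues) *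
    (star (Matrix.posSemidef_conjTranspose_mul_self A).1.eigenvectorUnitary : Matrix n n ℂ)).trace).re

noncomputable def vnEntropy {n : Type*} [Fintype n] [DecidableEq n] (ρ : Matrix n n ℂ) : ℝ :=
  if h : ρ.IsHermitian then -∑ i, (h.eigenvalues i * Real.log (h.eigenvalues i)) else 0

def ptraceL {a b : Type*} [Fintype a] (M : Matrix (a × b) (a × b) ℂ) : Matrix b b ℂ :=
  Matrix.of fun i j => ∑ k : a, M (k, i) (k, j)

def ptraceR {a b : Type*} [Fintype b] (M : Matrix (a × b) (a × b) ℂ) : Matrix a a ℂ :=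
  Matrix.of fun i j => ∑ k : b, M (i, k) (j, k)

def ptrace3M {a b c : Type*} [Fintype b] (M : Matrix (a × b × c) (a × b × c) ℂ) :
    Matrix (a × c) (a × c) ℂ :=
  Matrix.of fun i j => ∑ k : b, M (i.1, k, i.2) (j.1, k, j.2)

open scoped Classical in
noncomputable def msqrt {n : Type*} [Fintype n] [DecidableEq n] (A : Matrix n n ℂ) :
    Matrix n n ℂ :=
  if h : A.PosSemidef then
    h.1.eigenvectorUnitary.1 * Matrix.diagonal (((↑) : ℝ → ℂ) ∘ Real.sqrt ∘ h.1.eigenvalues) *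
      (star h.1.eigenvectorUnitary : Matrix n n ℂ) else 0

noncomputable def fidelity {n : Type*} [Fintype n] [DecidableEq n] (ρ σ : Matrix n n ℂ) : ℝ :=
  (((msqrt (msqrt σ * ρ * msqrt σ)).trace).re) ^ 2

def outer {n : Type*} (v : n → ℂ) : Matrix n n ℂ :=
  Matrix.of fun i j => v i * (starRingEnd ℂ) (v j)

def krausApply {ι a b : Type*} [Fintype ι] [Fintype a]
    (K : ι → Matrix b a ℂ) (ρ : Matrix a a ℂ) : Matrix b b ℂ :=
  ∑ i, K i * ρ * (K i)ᴴ

/-!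
Diagonalise `ρ - σ = U diag(d) U⋆`. For an effect `0 ≤ Λ ≤ 1` the diagonal entries of `U⋆ Λ U`
lie in `[0, 1]`, so `Re tr (Λ (ρ - σ)) ≤ ∑ dᵢ⁺`, with equality for the spectral projection onto
the nonnegative eigenvalues. Since `tr (ρ - σ) = 0`, `∑ dᵢ⁺ = ½ ∑ |dᵢ| = ½ ‖ρ - σ‖₁`.
-/

open Matrix Unitary
open scoped MatrixOrder

lemma Complex.re_mul_ofReal_le_posPart {z : ℂ} (h0 : 0 ≤ z) (h1 : z ≤ 1) (x : ℝ) :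
    (z * x).re ≤ x⁺ := by
  rw [Complex.re_mul_ofReal]
  have h0' : 0 ≤ z.re := (Complex.nonneg_iff.mp h0).1
  have h1' : z.re ≤ 1 := by simpa using (Complex.le_def.mp h1).1
  rcases le_total 0 x with hx | hx
  · rw [posPart_eq_self.mpr hx]
    nlinarith
  · rw [posPart_eq_zero.mpr hx]
    nlinarith

namespace Matrix

lemma PosSemidef.diag_le_one {n : Type*} [DecidableEq n] {Λ : Matrix n n ℂ}
    (h : (1 - Λ).PosSemidef) (i : n) : Λ i i ≤ 1 := by
  simpa using h.diag_nonneg (i := i)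

variable {n : Type*} [Fintype n] [DecidableEq n]

lemma trace_mul_diagonal (X : Matrix n n ℂ) (f : n → ℂ) :
    (X * diagonal f).trace = ∑ i, X i i * f i := by
  simp only [trace, diag, mul_diagonal]

lemma trace_conjStarAlgAut (U : unitaryGroup n ℂ) (X : Matrix n n ℂ) :
    (conjStarAlgAut ℂ _ U X).trace = X.trace := by
  rw [conjStarAlgAut_apply, trace_mul_cycle, coe_star_mul_self, one_mul]

lemma trace_mul_conjStarAlgAut (U : unitaryGroup n ℂ) (X Y : Matrix n n ℂ) :
    (X * conjStarAlgAut ℂ _ U Y).trace = (conjStarAlgAut ℂ _ (star U) X * Y).trace := by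
  rw [← trace_conjStarAlgAut (star U), map_mul, ← conjStarAlgAut_mul_apply, star_mul_self,
    map_one, StarAlgEquiv.one_apply]

lemma PosSemidef.conjStarAlgAut {X : Matrix n n ℂ} (hX : X.PosSemidef) (U : unitaryGroup n ℂ) :
    (conjStarAlgAut ℂ _ U X).PosSemidef :=
  hX.mul_mul_conjTranspose_same _

lemma posSemidef_conjStarAlgAut_diagonal (U : unitaryGroup n ℂ) {f : n → ℂ}
    (hf : ∀ i, 0 ≤ f i) : (conjStarAlgAut ℂ _ U (diagonal f)).PosSemidef :=
  (posSemidef_diagonal_iff.mpr hf).conjStarAlgAut U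

lemma re_trace_mul_add_re_trace_one_sub_mul (Λ ρ σ : Matrix n n ℂ) :
    (Λ * ρ).trace.re + ((1 - Λ) * σ).trace.re = σ.trace.re + (Λ * (ρ - σ)).trace.re := by
  simp only [sub_mul, mul_sub, one_mul, trace_sub, Complex.sub_re]
  ring

lemma traceNorm_eq_re_trace_sqrt (A : Matrix n n ℂ) :
    traceNorm A = (CFC.sqrt (Aᴴ * A)).trace.re := by
  have h := posSemidef_conjTranspose_mul_self A
  rw [CFC.sqrt_eq_real_sqrt _ h.nonneg, cfcₙ_eq_cfc (hf0 := Real.sqrt_zero), h.1.cfc_eq,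
    IsHermitian.cfc]
  rfl

namespace IsHermitian

variable {A : Matrix n n ℂ} (hA : A.IsHermitian)

lemma traceNorm_eq_sum_abs_eigenvalues : traceNorm A = ∑ i, |hA.eigenvalues i| := by
  set D : Matrix n n ℂ := diagonal fun i => ((|hA.eigenvalues i| : ℝ) : ℂ)
  have hD : D * D = diagonal (RCLike.ofReal ∘ hA.eigenvalues) *
      diagonal (RCLike.ofReal ∘ hA.eigenvalues) := by
    rw [diagonal_mul_diagonal, diagonal_mul_diagonal]
    congr 1 with i
    simp only [Function.comp_apply, ← Complex.ofReal_mul, abs_mul_abs_self]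
    exact Complex.ofReal_mul _ _
  have hsqrt : CFC.sqrt (Aᴴ * A) = conjStarAlgAut ℂ _ hA.eigenvectorUnitary D := by
    refine CFC.sqrt_unique ?_ (posSemidef_conjStarAlgAut_diagonal _ fun i => by positivity).nonneg
    rw [← map_mul, hD, map_mul, ← hA.spectral_theorem, hA.eq]
  rw [traceNorm_eq_re_trace_sqrt, hsqrt, trace_conjStarAlgAut, trace_diagonal,
    ← Complex.ofReal_sum, Complex.ofReal_re]

lemma sum_posPart_eigenvalues (h : A.trace = 0) :
    ∑ i, (hA.eigenvalues i)⁺ = traceNorm A / 2 := by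
  have hsum : ∑ i, hA.eigenvalues i = 0 := by
    simpa using congrArg Complex.re (hA.trace_eq_sum_eigenvalues.symm.trans h)
  have hpos (x : ℝ) : x⁺ = (|x| + x) / 2 := by
    rw [add_comm, add_abs_eq_two_nsmul_posPart, two_nsmul]
    ring
  simp_rw [hpos, ← Finset.sum_div, Finset.sum_add_distrib, hsum, add_zero,
    hA.traceNorm_eq_sum_abs_eigenvalues]

lemma re_trace_mul_le_sum_posPart_eigenvalues {Λ : Matrix n n ℂ} (hΛ : Λ.PosSemidef)
    (h1Λ : (1 - Λ).PosSemidef) : (Λ * A).trace.re ≤ ∑ i, (hA.eigenvalues i)⁺ := by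
  set M := conjStarAlgAut ℂ _ (star hA.eigenvectorUnitary) Λ
  have h1M : (1 - M).PosSemidef := by
    simpa only [M, map_sub, map_one] using h1Λ.conjStarAlgAut (star hA.eigenvectorUnitary)
  conv_lhs => rw [hA.spectral_theorem]
  rw [trace_mul_conjStarAlgAut, trace_mul_diagonal, Complex.re_sum]
  exact Finset.sum_le_sum fun i _ =>
    Complex.re_mul_ofReal_le_posPart (hΛ.conjStarAlgAut _).diag_nonneg (h1M.diag_le_one i) _

def posSpectralProj : Matrix n n ℂ :=
  conjStarAlgAut ℂ _ hA.eigenvectorUnitary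
    (diagonal fun i => if 0 ≤ hA.eigenvalues i then 1 else 0)

lemma posSemidef_posSpectralProj : hA.posSpectralProj.PosSemidef :=
  posSemidef_conjStarAlgAut_diagonal _ fun i => by split_ifs <;> simp

lemma posSemidef_one_sub_posSpectralProj : (1 - hA.posSpectralProj).PosSemidef := by
  rw [posSpectralProj, ← map_one (conjStarAlgAut ℂ _ hA.eigenvectorUnitary), ← map_sub,
    ← diagonal_one, diagonal_sub]
  exact posSemidef_conjStarAlgAut_diagonal _ fun i => by split_ifs <;> simp

lemma re_trace_posSpectralProj_mul :
    (hA.posSpectralProj * A).trace.re = ∑ i, (hA.eigenvalues i)⁺ := by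
  have hprod : hA.posSpectralProj * A = conjStarAlgAut ℂ _ hA.eigenvectorUnitary
      ((diagonal fun i => if 0 ≤ hA.eigenvalues i then 1 else 0) *
        diagonal (RCLike.ofReal ∘ hA.eigenvalues)) := by
    rw [map_mul, ← hA.spectral_theorem, posSpectralProj]
  rw [hprod, trace_conjStarAlgAut, diagonal_mul_diagonal, trace_diagonal, Complex.re_sum]
  refine Finset.sum_congr rfl fun i _ => ?_
  split_ifs with h
  · simp [posPart_eq_self.mpr h]
  · simp [posPart_eq_zero.mpr (not_le.mp h).le]

end IsHermitian

end Matrix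

theorem helstrom {n : Type*} [Fintype n] [DecidableEq n]
    (ρ σ : Matrix n n ℂ) (hρ : ρ.PosSemidef) (hρ1 : ρ.trace = 1)
    (hσ : σ.PosSemidef) (hσ1 : σ.trace = 1) :
    IsGreatest {r : ℝ | ∃ Λ : Matrix n n ℂ, Λ.PosSemidef ∧ (1 - Λ).PosSemidef ∧
        r = (1/2) * ((Λ * ρ).trace).re + (1/2) * (((1 - Λ) * σ).trace).re}
      (1/2 + (1/4) * traceNorm (ρ - σ)) := by
  have hΔ : (ρ - σ).IsHermitian := hρ.1.sub hσ.1
  have hpos : ∑ i, (hΔ.eigenvalues i)⁺ = traceNorm (ρ - σ) / 2 :=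
    hΔ.sum_posPart_eigenvalues (by rw [trace_sub, hρ1, hσ1, sub_self])
  have hprob (Λ : Matrix n n ℂ) : (1/2) * ((Λ * ρ).trace).re + (1/2) * (((1 - Λ) * σ).trace).re
      = 1/2 + (1/2) * (Λ * (ρ - σ)).trace.re := by
    have h := re_trace_mul_add_re_trace_one_sub_mul Λ ρ σ
    rw [hσ1, Complex.one_re] at h
    linarith
  refine ⟨⟨hΔ.posSpectralProj, hΔ.posSemidef_posSpectralProj,
    hΔ.posSemidef_one_sub_posSpectralProj, ?_⟩, ?_⟩
  · rw [hprob, hΔ.re_trace_posSpectralProj_mul, hpos]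
    ring
  · rintro r ⟨Λ, hΛ, h1Λ, rfl⟩
    linarith [hprob Λ, hΔ.re_trace_mul_le_sum_posPart_eigenvalues hΛ h1Λ]
end
end

section
/- With the channel distance ‖M - N‖_ω (supremum over extensions of ω of the trace distance of outputs): for CPTP maps M, N : A → B and states ω, σ on A, ‖M - N‖_ω ≤ ‖M - N‖_σ + 4√(‖ω - σ‖₁). -/
open scoped Matrix Kronecker ComplexOrder

noncomputable section

noncomputable def cdist {i k a b : Type*} [Fintype i] [Fintype k] [Fintype a] [DecidableEq a]
    [Fintype b] [DecidableEq b]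
    (K : i -> Matrix b a Complex) (L : k -> Matrix b a Complex) (w : Matrix a a Complex) : Real :=
  sSup {r | exists (m : Nat) (x : Matrix (Fin m × a) (Fin m × a) Complex),
    x.PosSemidef ∧ x.trace = 1 ∧ ptraceL x = w ∧
    r = traceNorm (krausApply (fun j => (1 : Matrix (Fin m) (Fin m) Complex) ⊗ₖ K j) x
          - krausApply (fun j => (1 : Matrix (Fin m) (Fin m) Complex) ⊗ₖ L j) x)}

namespace CAux
open Matrix
set_option linter.unusedSectionVars false
variable {n : Type*} [Fintype n] [DecidableEq n]
variable {A B : Matrix n n ℂ}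


open scoped MatrixOrder in
lemma posSemidef_iff_eq_transpose_mul_self {A : Matrix n n ℂ} :
    A.PosSemidef ↔ ∃ B : Matrix n n ℂ, A = Bᴴ * B := by
  constructor
  · intro hA
    obtain ⟨B, hB⟩ := CStarAlgebra.nonneg_iff_eq_star_mul_self.mp
      (Matrix.nonneg_iff_posSemidef.mpr hA)
    exact ⟨B, hB⟩
  · rintro ⟨B, rfl⟩
    exact posSemidef_conjTranspose_mul_self B

lemma psd_entry_re_nonneg {A : Matrix n n ℂ} (hA : A.PosSemidef) (i : n) :
    0 ≤ (A i i).re := by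
  have h := hA.dotProduct_mulVec_nonneg (Pi.single i 1)
  have : dotProduct (star (Pi.single i 1)) (A *ᵥ Pi.single i 1) = A i i := by
    classical
    simp only [dotProduct, mulVec_single, Pi.star_apply, Pi.single_apply, apply_ite,
      star_one, star_zero, ite_mul, zero_mul, one_mul, mul_one]
    rw [Finset.sum_ite_eq' Finset.univ i]
    simp
  rw [this] at h
  exact (Complex.le_def.mp h).1

lemma herm_trace_im {A : Matrix n n ℂ} (hA : A.IsHermitian) : (A.trace).im = 0 := by
  have h : star A.trace = A.trace := by
    conv_lhs => rw [← trace_conjTranspose, hA.eq]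
  have := congrArg Complex.im h
  simp only [Complex.star_def, Complex.conj_im] at this
  linarith

lemma psd_trace_re_nonneg {A : Matrix n n ℂ} (hA : A.PosSemidef) : 0 ≤ (A.trace).re := by
  rw [trace, Complex.re_sum]
  exact Finset.sum_nonneg fun i _ => psd_entry_re_nonneg hA i

lemma trace_mul_psd_nonneg {A B : Matrix n n ℂ} (hA : A.PosSemidef) (hB : B.PosSemidef) :
    0 ≤ ((A * B).trace).re := by
  obtain ⟨C, rfl⟩ := posSemidef_iff_eq_transpose_mul_self.mp hB
  have : (A * (Cᴴ * C)).trace = (C * A * Cᴴ).trace := by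
    rw [← Matrix.mul_assoc, trace_mul_cycle]
  rw [this]
  exact psd_trace_re_nonneg (hA.mul_mul_conjTranspose_same C)

/-- `Tr(A*B).re ≤ Tr(A).re` when `A` PSD and `B ≤ 1`. -/
lemma trace_mul_contraction_le {A B : Matrix n n ℂ} (hA : A.PosSemidef)
    (hB : (1 - B).PosSemidef) : ((A * B).trace).re ≤ (A.trace).re := by
  have h := trace_mul_psd_nonneg hA hB
  have : (A * (1 - B)).trace = A.trace - (A * B).trace := by
    rw [Matrix.mul_sub, Matrix.mul_one, trace_sub]
  rw [this, Complex.sub_re] at h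
  linarith



/-- functional calculus for a Hermitian matrix -/
def fc (hA : A.IsHermitian) (f : ℝ → ℝ) : Matrix n n ℂ :=
  (hA.eigenvectorUnitary : Matrix n n ℂ) * diagonal (fun i => (f (hA.eigenvalues i) : ℂ)) *
    (star (hA.eigenvectorUnitary : Matrix n n ℂ))

lemma star_mul_self_eigU (hA : A.IsHermitian) :
    (star (hA.eigenvectorUnitary : Matrix n n ℂ)) * (hA.eigenvectorUnitary : Matrix n n ℂ) = 1 :=
  Matrix.mem_unitaryGroup_iff'.mp hA.eigenvectorUnitary.2

lemma mul_star_self_eigU (hA : A.IsHermitian) :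
    (hA.eigenvectorUnitary : Matrix n n ℂ) * (star (hA.eigenvectorUnitary : Matrix n n ℂ)) = 1 :=
  Matrix.mem_unitaryGroup_iff.mp hA.eigenvectorUnitary.2

lemma fc_mul (hA : A.IsHermitian) (f g : ℝ → ℝ) :
    fc hA f * fc hA g = fc hA (fun x => f x * g x) := by
  unfold fc
  have hcancel : ∀ X : Matrix n n ℂ, (star (hA.eigenvectorUnitary : Matrix n n ℂ)) *
      ((hA.eigenvectorUnitary : Matrix n n ℂ) * X) = X := fun X => by
    rw [← Matrix.mul_assoc, star_mul_self_eigU hA, Matrix.one_mul]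
  simp only [Matrix.mul_assoc, hcancel]
  congr 1
  rw [← Matrix.mul_assoc, diagonal_mul_diagonal]
  congr 1
  ext i
  push_cast
  ring

lemma fc_herm (hA : A.IsHermitian) (f : ℝ → ℝ) : (fc hA f).IsHermitian := by
  unfold fc IsHermitian
  simp only [Matrix.star_eq_conjTranspose, conjTranspose_mul, conjTranspose_conjTranspose,
    diagonal_conjTranspose, Matrix.mul_assoc, Pi.star_def, Complex.star_def,
    Complex.conj_ofReal]

lemma fc_id (hA : A.IsHermitian) : fc hA (fun x => x) = A := by
  conv_rhs => rw [hA.spectral_theorem]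
  rfl

lemma fc_one (hA : A.IsHermitian) : fc hA (fun _ => 1) = 1 := by
  unfold fc
  simp only [Complex.ofReal_one, diagonal_one, Matrix.mul_one, mul_star_self_eigU hA]

lemma fc_sub (hA : A.IsHermitian) (f g : ℝ → ℝ) :
    fc hA f - fc hA g = fc hA (fun x => f x - g x) := by
  unfold fc
  rw [← Matrix.sub_mul, ← Matrix.mul_sub, diagonal_sub]
  congr 2
  ext i
  push_cast
  ring

lemma fc_psd (hA : A.IsHermitian) {f : ℝ → ℝ} (hf : ∀ x, 0 ≤ f x) :
    (fc hA f).PosSemidef := by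
  have hd : PosSemidef (diagonal (fun i => (f (hA.eigenvalues i) : ℂ))) := by
    apply PosSemidef.diagonal
    rw [Pi.le_def]
    intro i
    simpa using Complex.zero_le_real.mpr (hf _)
  have h2 := hd.mul_mul_conjTranspose_same (hA.eigenvectorUnitary : Matrix n n ℂ)
  unfold fc
  simpa [Matrix.star_eq_conjTranspose] using h2

lemma fc_trace (hA : A.IsHermitian) (f : ℝ → ℝ) :
    (fc hA f).trace = ((∑ i, f (hA.eigenvalues i) : ℝ) : ℂ) := by
  unfold fc
  rw [trace_mul_cycle, star_mul_self_eigU hA, Matrix.one_mul, trace_diagonal]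
  norm_cast


def _root_.Matrix.PosSemidef.sqrt {A : Matrix n n ℂ} (hA : A.PosSemidef) : Matrix n n ℂ :=
  hA.1.eigenvectorUnitary.1 * Matrix.diagonal (((↑) : ℝ → ℂ) ∘ Real.sqrt ∘ hA.1.eigenvalues) *
      (star hA.1.eigenvectorUnitary : Matrix n n ℂ)

lemma sqrt_eq_fc {A : Matrix n n ℂ} (hA : A.PosSemidef) : hA.sqrt = fc hA.1 Real.sqrt := rfl

lemma _root_.Matrix.PosSemidef.posSemidef_sqrt {A : Matrix n n ℂ} (hA : A.PosSemidef) :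
    hA.sqrt.PosSemidef := by
  rw [sqrt_eq_fc]
  exact fc_psd hA.1 Real.sqrt_nonneg

lemma _root_.Matrix.PosSemidef.sqrt_mul_self {A : Matrix n n ℂ} (hA : A.PosSemidef) :
    hA.sqrt * hA.sqrt = A := by
  rw [sqrt_eq_fc, fc_mul]
  conv_rhs => rw [← fc_id hA.1]
  have key : ∀ i, Real.sqrt (hA.1.eigenvalues i) * Real.sqrt (hA.1.eigenvalues i)
      = hA.1.eigenvalues i := fun i => Real.mul_self_sqrt (hA.eigenvalues_nonneg i)
  unfold fc
  simp only [key]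

open scoped MatrixOrder in
lemma _root_.Matrix.PosSemidef.eq_sqrt_of_sq_eq {A : Matrix n n ℂ} (hA : A.PosSemidef)
    {B : Matrix n n ℂ} (hB : B.PosSemidef) (hAB : A ^ 2 = B) : A = hB.sqrt := by
  have h1 : CFC.sqrt B = A :=
    CFC.sqrt_unique (by rw [← hAB, sq]) (Matrix.nonneg_iff_posSemidef.mpr hA)
  have h2 : CFC.sqrt B = hB.sqrt :=
    CFC.sqrt_unique hB.sqrt_mul_self (Matrix.nonneg_iff_posSemidef.mpr hB.posSemidef_sqrt)
  rw [← h1, h2]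

lemma traceNorm_eq (A : Matrix n n ℂ) :
    traceNorm A = ((posSemidef_conjTranspose_mul_self A).sqrt.trace).re := rfl



lemma psd_sqrt_congr {A B : Matrix n n ℂ} (h : A = B) (hA : A.PosSemidef) (hB : B.PosSemidef) :
    hA.sqrt = hB.sqrt := by subst h; rfl

lemma traceNorm_ext (h : Aᴴ * A = Bᴴ * B) : traceNorm A = traceNorm B := by
  rw [traceNorm_eq, traceNorm_eq]
  rw [psd_sqrt_congr h (posSemidef_conjTranspose_mul_self A) (posSemidef_conjTranspose_mul_self B)]

lemma traceNorm_neg (A : Matrix n n ℂ) : traceNorm (-A) = traceNorm A :=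
  traceNorm_ext (by simp)

lemma traceNorm_nonneg (A : Matrix n n ℂ) : 0 ≤ traceNorm A :=
  psd_trace_re_nonneg (posSemidef_conjTranspose_mul_self A).posSemidef_sqrt

lemma traceNorm_herm (hA : A.IsHermitian) :
    traceNorm A = ∑ i, |hA.eigenvalues i| := by
  have habs : fc hA (fun x => |x|) = (posSemidef_conjTranspose_mul_self A).sqrt := by
    apply PosSemidef.eq_sqrt_of_sq_eq (fc_psd hA (fun x => abs_nonneg x))
    rw [pow_two, fc_mul]
    have h2 : Aᴴ * A = fc hA (fun x => x) * fc hA (fun x => x) := by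
      rw [fc_id, hA.eq]
    have h3 : (fun x : ℝ => |x| * |x|) = fun x : ℝ => x * x :=
      funext fun x => abs_mul_abs_self x
    rw [h2, fc_mul, h3]
  rw [traceNorm_eq]
  rw [← habs, fc_trace]
  simp

lemma traceNorm_psd (hA : A.PosSemidef) : traceNorm A = (A.trace).re := by
  have : A = (posSemidef_conjTranspose_mul_self A).sqrt := by
    apply hA.eq_sqrt_of_sq_eq
    rw [pow_two, hA.1.eq]
  rw [traceNorm_eq]
  rw [← this]

/-- duality: `|Tr(A W)| ≤ ‖A‖₁` for a Hermitian `A` and contraction `W`. -/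
lemma trace_mul_contraction_abs_le (hA : A.IsHermitian) {W : Matrix n n ℂ}
    (hW : (1 - Wᴴ * W).PosSemidef) : ‖(A * W).trace‖ ≤ traceNorm A := by
  set U := (hA.eigenvectorUnitary : Matrix n n ℂ) with hU
  have hU1 : Uᴴ * U = 1 := by
    rw [← Matrix.star_eq_conjTranspose]; exact Matrix.mem_unitaryGroup_iff'.mp hA.eigenvectorUnitary.2
  have hU2 : U * Uᴴ = 1 := by
    rw [← Matrix.star_eq_conjTranspose]; exact Matrix.mem_unitaryGroup_iff.mp hA.eigenvectorUnitary.2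
  have hc1 : ∀ X : Matrix n n ℂ, U * (Uᴴ * X) = X := fun X => by
    rw [← Matrix.mul_assoc, hU2, Matrix.one_mul]
  have hc2 : ∀ X : Matrix n n ℂ, Uᴴ * (U * X) = X := fun X => by
    rw [← Matrix.mul_assoc, hU1, Matrix.one_mul]
  set B := Uᴴ * W * U with hB
  have hAW : (A * W).trace = (diagonal (fun i => (hA.eigenvalues i : ℂ)) * B).trace := by
    conv_lhs => rw [hA.spectral_theorem]
    rw [Unitary.conjStarAlgAut_apply, Matrix.star_eq_conjTranspose, Matrix.mul_assoc, Matrix.mul_assoc, trace_mul_comm]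
    rw [hB]
    simp only [Matrix.mul_assoc]
    rfl
  have hBB : Bᴴ * B = Uᴴ * ((Wᴴ * W) * U) := by
    rw [hB]
    simp only [conjTranspose_mul, conjTranspose_conjTranspose, Matrix.mul_assoc, hc1]
  have hBpsd : (1 - Bᴴ * B).PosSemidef := by
    have h2 := hW.conjTranspose_mul_mul_same U
    have h3 : Uᴴ * (1 - Wᴴ * W) * U = 1 - Bᴴ * B := by
      rw [Matrix.mul_sub, Matrix.mul_one, Matrix.sub_mul, hU1, hBB]
      simp only [Matrix.mul_assoc]
    rwa [h3] at h2
  have hBij : ∀ i, ‖B i i‖ ≤ 1 := by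
    intro i
    have h1 : ((Bᴴ * B) i i).re ≤ 1 := by
      have := psd_entry_re_nonneg hBpsd i
      have h0 : ((1 : Matrix n n ℂ) i i).re = 1 := by simp
      simp only [Matrix.sub_apply, Complex.sub_re] at this
      rw [h0] at this
      linarith
    have h2 : Complex.normSq (B i i) ≤ ((Bᴴ * B) i i).re := by
      rw [Matrix.mul_apply, Complex.re_sum]
      have hnn : ∀ k, (0:ℝ) ≤ ((Bᴴ i k * B k i)).re := by
        intro k
        rw [conjTranspose_apply]
        simp [Complex.star_def, mul_comm, Complex.mul_conj, Complex.normSq_nonneg]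
      calc Complex.normSq (B i i) = ((Bᴴ i i) * B i i).re := by
            rw [conjTranspose_apply]
            simp [Complex.star_def, mul_comm, Complex.mul_conj]
        _ ≤ ∑ k, ((Bᴴ i k) * B k i).re :=
            Finset.single_le_sum (fun k _ => hnn k) (Finset.mem_univ i)
    have h3 : Complex.normSq (B i i) ≤ 1 := le_trans h2 h1
    have := Complex.sq_norm (B i i)
    nlinarith [norm_nonneg (B i i)]
  calc ‖(A * W).trace‖ = ‖∑ i, (hA.eigenvalues i : ℂ) * B i i‖ := by
        rw [hAW, trace]
        congr 1
        apply Finset.sum_congr rfl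
        intro i _
        simp [diagonal_mul, diag_apply]
    _ ≤ ∑ i, ‖(hA.eigenvalues i : ℂ) * B i i‖ :=
        norm_sum_le _ _
    _ ≤ ∑ i, |hA.eigenvalues i| := by
        apply Finset.sum_le_sum
        intro i _
        rw [norm_mul, Complex.norm_real, Real.norm_eq_abs]
        calc |hA.eigenvalues i| * ‖B i i‖ ≤ |hA.eigenvalues i| * 1 :=
              mul_le_mul_of_nonneg_left (hBij i) (abs_nonneg _)
          _ = _ := mul_one _
    _ = traceNorm A := (traceNorm_herm hA).symm

/-- sign dual witness -/
lemma exists_dual_sign (hA : A.IsHermitian) :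
    ∃ W : Matrix n n ℂ, W.IsHermitian ∧ (1 - Wᴴ * W).PosSemidef ∧
      (A * W).trace = (traceNorm A : ℂ) := by
  classical
  let sgn : ℝ → ℝ := fun x => if x < 0 then -1 else if 0 < x then 1 else 0
  have hsq : ∀ x, sgn x * sgn x ≤ 1 := by
    intro x
    show (if x < 0 then (-1:ℝ) else if 0 < x then 1 else 0) *
      (if x < 0 then (-1:ℝ) else if 0 < x then 1 else 0) ≤ 1
    rcases lt_trichotomy x 0 with h|h|h
    · simp [h]
    · simp [h]
    · simp [h, not_lt.mpr h.le]
  have hxs : ∀ x : ℝ, x * sgn x = |x| := by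
    intro x
    show x * (if x < 0 then (-1:ℝ) else if 0 < x then 1 else 0) = |x|
    rcases lt_trichotomy x 0 with h|h|h
    · simp [h, abs_of_neg h]
    · simp [h]
    · simp [h, not_lt.mpr h.le, abs_of_pos h]
  refine ⟨fc hA sgn, fc_herm hA sgn, ?_, ?_⟩
  · rw [(fc_herm hA sgn).eq, fc_mul]
    have : (1 : Matrix n n ℂ) - fc hA (fun x => sgn x * sgn x)
        = fc hA (fun x => 1 - sgn x * sgn x) := by
      rw [← fc_one hA, fc_sub]
    rw [this]
    exact fc_psd hA (fun x => by linarith [hsq x])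
  · have h5 : A * fc hA sgn = fc hA (fun x => x) * fc hA sgn := by rw [fc_id]
    have h6 : (fun x => x * sgn x) = fun x : ℝ => |x| := funext hxs
    rw [h5, fc_mul, h6, fc_trace, traceNorm_herm hA]

lemma traceNorm_add_le (hA : A.IsHermitian) (hB : B.IsHermitian) :
    traceNorm (A + B) ≤ traceNorm A + traceNorm B := by
  obtain ⟨W, _, hW, hWt⟩ := exists_dual_sign (hA.add hB)
  have h0 : traceNorm (A + B) = ‖((A + B) * W).trace‖ := by
    rw [hWt, Complex.norm_real, Real.norm_eq_abs, abs_of_nonneg (traceNorm_nonneg _)]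
  rw [h0, Matrix.add_mul, trace_add]
  calc ‖(A * W).trace + (B * W).trace‖
      ≤ ‖(A * W).trace‖ + ‖(B * W).trace‖ := norm_add_le _ _
    _ ≤ traceNorm A + traceNorm B :=
        add_le_add (trace_mul_contraction_abs_le hA hW) (trace_mul_contraction_abs_le hB hW)

lemma traceNorm_sub_le (hA : A.IsHermitian) (hB : B.IsHermitian) :
    traceNorm (A - B) ≤ traceNorm A + traceNorm B := by
  rw [sub_eq_add_neg]
  calc traceNorm (A + -B) ≤ traceNorm A + traceNorm (-B) := traceNorm_add_le hA hB.neg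
    _ = traceNorm A + traceNorm B := by rw [traceNorm_neg]


lemma psd_sum {ι : Type*} [Fintype ι] (f : ι → Matrix n n ℂ) (hf : ∀ i, (f i).PosSemidef) :
    (∑ i, f i).PosSemidef := by
  classical
  apply Finset.sum_induction _ _ (fun a b (ha : Matrix.PosSemidef a) hb => ha.add hb)
    Matrix.PosSemidef.zero (fun i _ => hf i)

lemma traceNorm_psd_sub_le {P Q : Matrix n n ℂ} (hP : P.PosSemidef) (hQ : Q.PosSemidef) :
    traceNorm (P - Q) ≤ (P.trace).re + (Q.trace).re := by
  calc traceNorm (P - Q) ≤ traceNorm P + traceNorm Q := traceNorm_sub_le hP.1 hQ.1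
    _ = (P.trace).re + (Q.trace).re := by rw [traceNorm_psd hP, traceNorm_psd hQ]

lemma posneg_decomp {Z : Matrix n n ℂ} (hZ : Z.IsHermitian) :
    ∃ P Q : Matrix n n ℂ, P.PosSemidef ∧ Q.PosSemidef ∧ Z = P - Q ∧
      (P.trace).re + (Q.trace).re = traceNorm Z ∧
      (P.trace).re - (Q.trace).re = (Z.trace).re := by
  refine ⟨fc hZ (fun x => max x 0), fc hZ (fun x => max (-x) 0),
    fc_psd hZ (fun x => le_max_right _ _), fc_psd hZ (fun x => le_max_right _ _), ?_, ?_, ?_⟩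
  · rw [fc_sub]
    have h1 : (fun x : ℝ => max x 0 - max (-x) 0) = fun x : ℝ => x := by
      funext x
      rcases le_total x 0 with h|h
      · simp [max_eq_right h, max_eq_left (neg_nonneg.mpr h)]
      · simp [max_eq_left h, max_eq_right (neg_nonpos.mpr h)]
    rw [h1, fc_id]
  · rw [fc_trace, fc_trace, traceNorm_herm hZ, Complex.ofReal_re, Complex.ofReal_re,
      ← Finset.sum_add_distrib]
    apply Finset.sum_congr rfl
    intro i _
    rcases le_total (hZ.eigenvalues i) 0 with h|h
    · simp [max_eq_right h, max_eq_left (neg_nonneg.mpr h), abs_of_nonpos h]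
    · simp [max_eq_left h, max_eq_right (neg_nonpos.mpr h), abs_of_nonneg h]
  · have hzt : Z.trace = ((∑ i, hZ.eigenvalues i : ℝ) : ℂ) := by
      conv_lhs => rw [← fc_id hZ]
      rw [fc_trace]
    rw [fc_trace, fc_trace, hzt, Complex.ofReal_re, Complex.ofReal_re, Complex.ofReal_re,
      ← Finset.sum_sub_distrib]
    apply Finset.sum_congr rfl
    intro i _
    rcases le_total (hZ.eigenvalues i) 0 with h|h
    · simp [max_eq_right h, max_eq_left (neg_nonneg.mpr h)]
    · simp [max_eq_left h, max_eq_right (neg_nonpos.mpr h)]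

section Kraus
variable {ι m : Type*} [Fintype ι] [Fintype m] [DecidableEq m]

lemma krausApply_psd (K : ι → Matrix m n ℂ) {ρ : Matrix n n ℂ} (hρ : ρ.PosSemidef) :
    (krausApply K ρ).PosSemidef :=
  psd_sum _ (fun i => hρ.mul_mul_conjTranspose_same (K i))

lemma krausApply_sub (K : ι → Matrix m n ℂ) (ρ₁ ρ₂ : Matrix n n ℂ) :
    krausApply K (ρ₁ - ρ₂) = krausApply K ρ₁ - krausApply K ρ₂ := by
  unfold krausApply
  rw [← Finset.sum_sub_distrib]
  apply Finset.sum_congr rfl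
  intro i _
  rw [Matrix.mul_sub, Matrix.sub_mul]

lemma krausApply_trace (K : ι → Matrix m n ℂ) (hK : ∑ i, (K i)ᴴ * K i = 1)
    (ρ : Matrix n n ℂ) : (krausApply K ρ).trace = ρ.trace := by
  unfold krausApply
  rw [trace_sum]
  have h1 : ∀ i, (K i * ρ * (K i)ᴴ).trace = ((K i)ᴴ * K i * ρ).trace := by
    intro i
    rw [trace_mul_comm, ← Matrix.mul_assoc]
  rw [Finset.sum_congr rfl (fun i _ => h1 i), ← trace_sum, ← Finset.sum_mul, hK,
    Matrix.one_mul]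

lemma krausApply_herm (K : ι → Matrix m n ℂ) {ρ : Matrix n n ℂ} (hρ : ρ.IsHermitian) :
    (krausApply K ρ).IsHermitian := by
  unfold krausApply Matrix.IsHermitian
  rw [conjTranspose_sum]
  apply Finset.sum_congr rfl
  intro i _
  simp only [conjTranspose_mul, conjTranspose_conjTranspose, hρ.eq, Matrix.mul_assoc]

lemma kraus_traceNorm_le (K : ι → Matrix m n ℂ) (hK : ∑ i, (K i)ᴴ * K i = 1)
    {Z : Matrix n n ℂ} (hZ : Z.IsHermitian) :
    traceNorm (krausApply K Z) ≤ traceNorm Z := by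
  obtain ⟨P, Q, hP, hQ, hPQ, hsum, _⟩ := posneg_decomp hZ
  have h2 : traceNorm (krausApply K Z) = traceNorm (krausApply K P - krausApply K Q) := by
    rw [hPQ, krausApply_sub]
  rw [h2]
  calc traceNorm (krausApply K P - krausApply K Q)
      ≤ ((krausApply K P).trace).re + ((krausApply K Q).trace).re :=
        traceNorm_psd_sub_le (krausApply_psd K hP) (krausApply_psd K hQ)
    _ = (P.trace).re + (Q.trace).re := by
        rw [krausApply_trace K hK, krausApply_trace K hK]
    _ = traceNorm Z := hsum

end Kraus

lemma trace_conjTranspose_mul_self_re (A : Matrix n n ℂ) :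
    ((Aᴴ * A).trace).re = ∑ p : n × n, Complex.normSq (A p.1 p.2) := by
  rw [trace]
  simp only [Matrix.mul_apply, conjTranspose_apply, diag_apply, Complex.re_sum]
  rw [Finset.sum_comm, ← Finset.sum_product']
  apply Finset.sum_congr rfl
  intro p _
  simp [Complex.star_def, mul_comm, Complex.mul_conj]

/-- Frobenius Cauchy-Schwarz -/
lemma frob_cs (A B : Matrix n n ℂ) :
    ‖(Aᴴ * B).trace‖ ≤
      Real.sqrt (((Aᴴ * A).trace).re) * Real.sqrt (((Bᴴ * B).trace).re) := by
  classical
  set v : EuclideanSpace ℂ (n × n) := WithLp.toLp 2 (fun p : n × n => A p.2 p.1)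
  set w : EuclideanSpace ℂ (n × n) := WithLp.toLp 2 (fun p : n × n => B p.2 p.1)
  have hinner : (inner ℂ v w : ℂ) = (Aᴴ * B).trace := by
    rw [trace]
    simp only [PiLp.inner_apply, RCLike.inner_apply, Matrix.mul_apply, conjTranspose_apply,
      diag_apply, WithLp.ofLp_toLp]
    rw [← Finset.sum_product']
    exact Finset.sum_congr rfl fun p _ => mul_comm _ _
  have hv : ‖v‖ = Real.sqrt (((Aᴴ * A).trace).re) := by
    rw [EuclideanSpace.norm_eq, trace_conjTranspose_mul_self_re]
    congr 1
    rw [← (Equiv.prodComm n n).sum_comp]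
    apply Finset.sum_congr rfl
    intro p _
    simp [v, Complex.sq_norm, Equiv.prodComm]
  have hw : ‖w‖ = Real.sqrt (((Bᴴ * B).trace).re) := by
    rw [EuclideanSpace.norm_eq, trace_conjTranspose_mul_self_re]
    congr 1
    rw [← (Equiv.prodComm n n).sum_comp]
    apply Finset.sum_congr rfl
    intro p _
    simp [w, Complex.sq_norm, Equiv.prodComm]
  calc ‖(Aᴴ * B).trace‖ = ‖(inner ℂ v w : ℂ)‖ := by rw [hinner]
    _ ≤ ‖v‖ * ‖w‖ := norm_inner_le_norm v w
    _ = _ := by rw [hv, hw]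

variable {r : Type*} [Fintype r] [DecidableEq r]

lemma sum_comm3 {α β γ : Type*} [Fintype α] [Fintype β] [Fintype γ] (f : α → β → γ → ℂ) :
    ∑ a, ∑ b, ∑ c, f a b c = ∑ c, ∑ b, ∑ a, f a b c := by
  calc ∑ a, ∑ b, ∑ c, f a b c = ∑ b, ∑ a, ∑ c, f a b c := Finset.sum_comm
    _ = ∑ b, ∑ c, ∑ a, f a b c := Finset.sum_congr rfl (fun p _ => Finset.sum_comm)
    _ = ∑ c, ∑ b, ∑ a, f a b c := Finset.sum_comm

lemma kron_conjT {p : Type*} (A : Matrix r r ℂ) (X : Matrix n p ℂ) : (A ⊗ₖ X)ᴴ = Aᴴ ⊗ₖ Xᴴ := by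
  ext ⟨i1, i2⟩ ⟨j1, j2⟩
  simp [conjTranspose_apply, kroneckerMap_apply, mul_comm]

lemma one_kron_conjT {p : Type*} (X : Matrix n p ℂ) :
    ((1 : Matrix r r ℂ) ⊗ₖ X)ᴴ = (1 : Matrix r r ℂ) ⊗ₖ Xᴴ := by
  rw [kron_conjT, conjTranspose_one]

lemma one_kron_sum {p : Type*} {ι : Type*} [Fintype ι] (C : ι → Matrix n p ℂ) :
    (1 : Matrix r r ℂ) ⊗ₖ (∑ i, C i) = ∑ i, (1 : Matrix r r ℂ) ⊗ₖ C i := by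
  ext ⟨i1, i2⟩ ⟨j1, j2⟩
  simp [kroneckerMap_apply, Matrix.sum_apply, Finset.mul_sum]

lemma one_kron_mul_apply (X : Matrix n n ℂ) (x : Matrix (r × n) (r × n) ℂ)
    (k : r) (i : n) (q : r × n) :
    (((1 : Matrix r r ℂ) ⊗ₖ X) * x) (k, i) q = ∑ p, X i p * x (k, p) q := by
  rw [Matrix.mul_apply, ← Finset.univ_product_univ, Finset.sum_product]
  simp [kroneckerMap_apply, one_apply, ite_mul, Finset.sum_ite_eq]

lemma mul_one_kron_apply (X : Matrix n n ℂ) (x : Matrix (r × n) (r × n) ℂ)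
    (q : r × n) (l : r) (j : n) :
    (x * ((1 : Matrix r r ℂ) ⊗ₖ X)) q (l, j) = ∑ p, x q (l, p) * X p j := by
  rw [Matrix.mul_apply, ← Finset.univ_product_univ, Finset.sum_product]
  simp [kroneckerMap_apply, one_apply, mul_ite, Finset.sum_ite_eq']

lemma ptraceL_apply (x : Matrix (r × n) (r × n) ℂ) (i j : n) :
    ptraceL x i j = ∑ k : r, x (k, i) (k, j) := rfl

lemma ptraceL_sub (x y : Matrix (r × n) (r × n) ℂ) :
    ptraceL (x - y) = ptraceL x - ptraceL y := by
  ext i j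
  simp [ptraceL_apply, Finset.sum_sub_distrib]

lemma trace_ptraceL (x : Matrix (r × n) (r × n) ℂ) : (ptraceL x).trace = x.trace := by
  rw [trace, trace]
  simp only [diag_apply, ptraceL_apply]
  rw [← Finset.univ_product_univ, Finset.sum_product]
  exact Finset.sum_comm

lemma ptraceL_conj (X : Matrix n n ℂ) (x : Matrix (r × n) (r × n) ℂ) :
    ptraceL (((1 : Matrix r r ℂ) ⊗ₖ X) * x * ((1 : Matrix r r ℂ) ⊗ₖ X)ᴴ)
      = X * ptraceL x * Xᴴ := by
  ext i j
  rw [ptraceL_apply]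
  have h1 : ∀ k : r, (((1 : Matrix r r ℂ) ⊗ₖ X) * x * ((1 : Matrix r r ℂ) ⊗ₖ X)ᴴ) (k, i) (k, j)
      = ∑ p, ∑ q, X i p * x (k, p) (k, q) * Xᴴ q j := by
    intro k
    rw [one_kron_conjT, mul_one_kron_apply]
    have h2 : ∀ q, (((1 : Matrix r r ℂ) ⊗ₖ X) * x) (k, i) (k, q) * Xᴴ q j
        = ∑ p, X i p * x (k, p) (k, q) * Xᴴ q j := by
      intro q
      rw [one_kron_mul_apply, Finset.sum_mul]
    rw [Finset.sum_congr rfl (fun q _ => h2 q)]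
    exact Finset.sum_comm
  rw [Finset.sum_congr rfl (fun k _ => h1 k), Matrix.mul_apply]
  have h3 : ∀ q', (X * ptraceL x) i q' * Xᴴ q' j
      = ∑ p, ∑ k : r, X i p * x (k, p) (k, q') * Xᴴ q' j := by
    intro q'
    rw [Matrix.mul_apply, Finset.sum_mul]
    apply Finset.sum_congr rfl
    intro p _
    rw [ptraceL_apply, Finset.mul_sum, Finset.sum_mul]
  rw [Finset.sum_congr rfl (fun q' _ => h3 q')]
  exact sum_comm3 _

lemma ptraceL_one_kron (R : Matrix n n ℂ) :
    ptraceL ((1 : Matrix r r ℂ) ⊗ₖ R) = (Fintype.card r : ℂ) • R := by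
  ext i j
  simp [ptraceL_apply, kroneckerMap_apply, one_apply, Finset.card_univ]

lemma trace_one_kron_mul (C : Matrix n n ℂ) (x : Matrix (r × n) (r × n) ℂ) :
    (((1 : Matrix r r ℂ) ⊗ₖ C) * x).trace = (C * ptraceL x).trace := by
  rw [trace, trace]
  simp only [diag_apply]
  rw [← Finset.univ_product_univ, Finset.sum_product]
  have h1 : ∀ k i, (((1 : Matrix r r ℂ) ⊗ₖ C) * x) (k, i) (k, i) = ∑ p, C i p * x (k, p) (k, i) :=
    fun k i => one_kron_mul_apply C x k i (k, i)
  simp only [h1, Matrix.mul_apply, ptraceL_apply, Finset.mul_sum]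
  rw [Finset.sum_comm]
  apply Finset.sum_congr rfl
  intro i _
  exact Finset.sum_comm


lemma key_scalar {g s e : ℝ} (hg0 : 0 ≤ g) (hs0 : 0 ≤ s) (hs1 : s ≤ 1) (he1 : e ≤ 1)
    (hgle : g ≤ 2*e - (1 - s)) :
    Real.sqrt g * (1 + Real.sqrt s) + (1 - s) ≤ 2 * Real.sqrt (2*e) := by
  have he0 : 0 ≤ e := by nlinarith
  set a := Real.sqrt s with ha
  set b := Real.sqrt (2*e) with hb
  have ha2 : a^2 = s := Real.sq_sqrt hs0
  have hb2 : b^2 = 2*e := Real.sq_sqrt (by linarith)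
  have ha0 : 0 ≤ a := Real.sqrt_nonneg s
  have hb0 : 0 ≤ b := Real.sqrt_nonneg _
  have ha1 : a ≤ 1 := by nlinarith
  have hble : b^2 ≤ 2 := by linarith
  have hd : 0 ≤ b^2 - (1 - a^2) := by nlinarith
  have h1 : Real.sqrt g ≤ Real.sqrt (b^2 - (1 - a^2)) := Real.sqrt_le_sqrt (by nlinarith)
  set u := Real.sqrt (b^2 - (1 - a^2)) with hu
  have hu0 : 0 ≤ u := Real.sqrt_nonneg _
  have hu2 : u^2 = b^2 - (1 - a^2) := Real.sq_sqrt hd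
  have h2b : 1 - a^2 ≤ 2*b := by nlinarith
  have hsq : (u * (1+a))^2 ≤ (2*b - (1 - a^2))^2 := by
    nlinarith [mul_nonneg (by linarith : (0:ℝ) ≤ 1 - a) (sq_nonneg ((3+a)*b - 2*(1+a))),
      mul_nonneg (by linarith : (0:ℝ) ≤ 1 - a) (by positivity : (0:ℝ) ≤ (1+a)^3)]
  have h3 : u * (1+a) ≤ 2*b - (1 - a^2) := by
    nlinarith [mul_nonneg hu0 (by linarith : (0:ℝ) ≤ 1 + a)]
  have h4 : Real.sqrt g * (1 + a) ≤ u * (1 + a) :=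
    mul_le_mul_of_nonneg_right h1 (by linarith)
  nlinarith [Real.sqrt_nonneg g]

lemma fc_congr (hA : A.IsHermitian) {f g : ℝ → ℝ}
    (h : ∀ i, f (hA.eigenvalues i) = g (hA.eigenvalues i)) : fc hA f = fc hA g := by
  unfold fc
  have h2 : (fun i => (f (hA.eigenvalues i) : ℂ)) = fun i => (g (hA.eigenvalues i) : ℂ) :=
    funext fun i => by rw [h i]
  rw [h2]

lemma fc_zero (hA : A.IsHermitian) : fc hA (fun _ => 0) = 0 := by
  unfold fc
  simp

lemma psd_eq_zero_of_trace_zero {A : Matrix n n ℂ} (hA : A.PosSemidef) (h : (A.trace).re = 0) :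
    A = 0 := by
  obtain ⟨C, rfl⟩ := posSemidef_iff_eq_transpose_mul_self.mp hA
  rw [trace_conjTranspose_mul_self_re] at h
  have hC : C = 0 := by
    ext i j
    have h2 : ∀ p ∈ Finset.univ (α := n × n), 0 ≤ Complex.normSq (C p.1 p.2) :=
      fun p _ => Complex.normSq_nonneg _
    have h3 := (Finset.sum_eq_zero_iff_of_nonneg h2).mp h (i, j) (Finset.mem_univ _)
    simpa using Complex.normSq_eq_zero.mp h3
  rw [hC]
  simp

lemma psd_smul_real {A : Matrix n n ℂ} {c : ℝ} (hc : 0 ≤ c) (hA : A.PosSemidef) :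
    ((c : ℂ) • A).PosSemidef := by
  constructor
  · unfold Matrix.IsHermitian
    rw [conjTranspose_smul, hA.1.eq]
    congr 1
    simp [Complex.star_def, Complex.conj_ofReal]
  · exact (hA.smul (Complex.zero_le_real.mpr hc)).2

lemma one_kron_psd {R : Matrix n n ℂ} (hR : R.PosSemidef) :
    ((1 : Matrix r r ℂ) ⊗ₖ R).PosSemidef := by
  obtain ⟨C, rfl⟩ := posSemidef_iff_eq_transpose_mul_self.mp hR
  have h1 : (1 : Matrix r r ℂ) ⊗ₖ (Cᴴ * C)
      = ((1 : Matrix r r ℂ) ⊗ₖ C)ᴴ * ((1 : Matrix r r ℂ) ⊗ₖ C) := by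
    rw [one_kron_conjT, ← Matrix.mul_kronecker_mul, Matrix.one_mul]
  rw [h1]
  exact posSemidef_conjTranspose_mul_self _

lemma sqrt_sub_psd {S M : Matrix n n ℂ} (hS : S.PosSemidef) (hM : M.PosSemidef)
    (hle : (M - S).PosSemidef) : (hM.sqrt - hS.sqrt).PosSemidef := by
  by_contra hcon
  set D := hM.sqrt - hS.sqrt with hD
  have hDh : D.IsHermitian := hM.posSemidef_sqrt.1.sub hS.posSemidef_sqrt.1
  have hneg : ∃ i, hDh.eigenvalues i < 0 := by
    by_contra hall
    push_neg at hall
    exact hcon (hDh.posSemidef_iff_eigenvalues_nonneg.mpr hall)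
  obtain ⟨i, hlneg⟩ := hneg
  set l := hDh.eigenvalues i with hl
  set v : n → ℂ := ⇑(hDh.eigenvectorBasis i) with hv
  have hDv : D *ᵥ v = (l : ℂ) • v := by
    have h := hDh.mulVec_eigenvectorBasis i
    funext j
    have hj := congrFun h j
    simpa [Pi.smul_apply, Complex.real_smul, smul_eq_mul] using hj
  have hvv : star v ⬝ᵥ v = 1 := by
    have hvn : ‖hDh.eigenvectorBasis i‖ = 1 := hDh.eigenvectorBasis.orthonormal.1 i
    have h := inner_self_eq_norm_sq_to_K (𝕜 := ℂ) (E := EuclideanSpace ℂ n)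
      (hDh.eigenvectorBasis i)
    rw [hvn] at h
    have h' : inner ℂ (hDh.eigenvectorBasis i) (hDh.eigenvectorBasis i) = (1 : ℂ) := by
      rw [h]; norm_num
    rw [← h']
    exact dotProduct_comm _ _
  set T := hM.sqrt + hS.sqrt with hT
  have hTpsd : T.PosSemidef := hM.posSemidef_sqrt.add hS.posSemidef_sqrt
  have key : D * T + T * D = (M - S) + (M - S) := by
    have ha : hM.sqrt * hM.sqrt = M := hM.sqrt_mul_self
    have hb : hS.sqrt * hS.sqrt = S := hS.sqrt_mul_self
    rw [hD, hT]
    have hnr : (hM.sqrt - hS.sqrt) * (hM.sqrt + hS.sqrt) + (hM.sqrt + hS.sqrt) * (hM.sqrt - hS.sqrt)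
        = hM.sqrt * hM.sqrt + hM.sqrt * hM.sqrt - (hS.sqrt * hS.sqrt + hS.sqrt * hS.sqrt) := by
      noncomm_ring
    rw [hnr, ha, hb]
    abel
  -- quadratic forms at v
  have hqDT : star v ⬝ᵥ (D * T) *ᵥ v = (l : ℂ) * (star v ⬝ᵥ T *ᵥ v) := by
    rw [← Matrix.mulVec_mulVec]
    rw [Matrix.dotProduct_mulVec (star v) D]
    have h2 : Matrix.vecMul (star v) D = star (D *ᵥ v) := by
      rw [Matrix.star_mulVec, hDh.eq]
    rw [h2, hDv]
    have h3 : star ((l : ℂ) • v) = (l : ℂ) • star v := by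
      funext j
      simp [Complex.star_def, Complex.conj_ofReal]
    rw [h3, smul_dotProduct, smul_eq_mul]
  have hqTD : star v ⬝ᵥ (T * D) *ᵥ v = (l : ℂ) * (star v ⬝ᵥ T *ᵥ v) := by
    rw [← Matrix.mulVec_mulVec, hDv, Matrix.mulVec_smul, dotProduct_smul, smul_eq_mul]
  have hqD : star v ⬝ᵥ D *ᵥ v = (l : ℂ) := by
    rw [hDv, dotProduct_smul, hvv, smul_eq_mul, mul_one]
  -- positivity
  have hMS := hle.dotProduct_mulVec_nonneg v
  have hqMS : star v ⬝ᵥ (D * T + T * D) *ᵥ v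
      = star v ⬝ᵥ (M - S) *ᵥ v + star v ⬝ᵥ (M - S) *ᵥ v := by
    rw [key, Matrix.add_mulVec, dotProduct_add]
  rw [Matrix.add_mulVec, dotProduct_add, hqDT, hqTD] at hqMS
  have hTv := hTpsd.dotProduct_mulVec_nonneg v
  set q := star v ⬝ᵥ T *ᵥ v with hq
  have hqre : 0 ≤ q.re ∧ q.im = 0 := by
    constructor
    · exact (Complex.le_def.mp hTv).1
    · exact ((Complex.le_def.mp hTv).2).symm
  have hMSre : 0 ≤ (star v ⬝ᵥ (M - S) *ᵥ v).re := (Complex.le_def.mp hMS).1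
  -- l * q.re ≥ 0 from hqMS
  have h5 : ((l : ℂ) * q).re = l * q.re := by
    rw [Complex.mul_re]
    simp [hqre.2]
  have h6 : 0 ≤ l * q.re := by
    have := congrArg Complex.re hqMS
    rw [Complex.add_re, Complex.add_re, h5] at this
    linarith
  have hq0 : q.re = 0 := by nlinarith
  -- now q(T) = 0; but q(T) + q(D) = 2 q(sqrt M)
  have hTD : T + D = hM.sqrt + hM.sqrt := by
    rw [hT, hD]
    abel
  have hqa := hM.posSemidef_sqrt.dotProduct_mulVec_nonneg v
  have h7 : star v ⬝ᵥ (T + D) *ᵥ v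
      = star v ⬝ᵥ hM.sqrt *ᵥ v + star v ⬝ᵥ hM.sqrt *ᵥ v := by
    rw [hTD, Matrix.add_mulVec, dotProduct_add]
  rw [Matrix.add_mulVec, dotProduct_add, hqD] at h7
  have h8 := congrArg Complex.re h7
  rw [Complex.add_re, Complex.add_re] at h8
  have h9 : 0 ≤ (star v ⬝ᵥ hM.sqrt *ᵥ v).re := (Complex.le_def.mp hqa).1
  have h10 : ((l : ℂ)).re = l := Complex.ofReal_re l
  rw [hq0, h10] at h8
  linarith

lemma trace_sqrt_mono {S M : Matrix n n ℂ} (hS : S.PosSemidef) (hM : M.PosSemidef)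
    (hle : (M - S).PosSemidef) : (S.trace).re ≤ ((hS.sqrt * hM.sqrt).trace).re := by
  have h := trace_mul_psd_nonneg hS.posSemidef_sqrt (sqrt_sub_psd hS hM hle)
  rw [Matrix.mul_sub, trace_sub, hS.sqrt_mul_self] at h
  rw [Complex.sub_re] at h
  linarith

lemma fc_sqrt_eq {M : Matrix n n ℂ} (hM : M.PosSemidef) : fc hM.1 Real.sqrt = hM.sqrt := by
  apply PosSemidef.eq_sqrt_of_sq_eq (fc_psd hM.1 (fun x => Real.sqrt_nonneg x))
  rw [pow_two, fc_mul]
  have h1 : fc hM.1 (fun x => Real.sqrt x * Real.sqrt x) = fc hM.1 (fun x => x) :=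
    fc_congr hM.1 (fun i => Real.mul_self_sqrt (hM.eigenvalues_nonneg i))
  rw [h1, fc_id]


lemma ptraceL_add (x y : Matrix (r × n) (r × n) ℂ) :
    ptraceL (x + y) = ptraceL x + ptraceL y := by
  ext i j
  simp [ptraceL_apply, Finset.sum_add_distrib]

lemma ptraceL_smul (c : ℂ) (x : Matrix (r × n) (r × n) ℂ) :
    ptraceL (c • x) = c • ptraceL x := by
  ext i j
  simp [ptraceL_apply, Finset.mul_sum]

lemma traceNorm_triangle3 {A B C : Matrix n n ℂ} (hA : A.IsHermitian) (hB : B.IsHermitian)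
    (hC : C.IsHermitian) : traceNorm (A - B) ≤ traceNorm (A - C) + traceNorm (C - B) := by
  have h : A - B = (A - C) + (C - B) := by abel
  rw [h]
  exact traceNorm_add_le (hA.sub hC) (hC.sub hB)

lemma one_kron_kraus_sum {ι b : Type*} [Fintype ι] [Fintype b] [DecidableEq b]
    (K : ι → Matrix b n ℂ) (hK : ∑ i, (K i)ᴴ * K i = 1) :
    ∑ j, ((1 : Matrix r r ℂ) ⊗ₖ K j)ᴴ * ((1 : Matrix r r ℂ) ⊗ₖ K j)
      = (1 : Matrix (r × n) (r × n) ℂ) := by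
  have h1 : ∀ j, ((1 : Matrix r r ℂ) ⊗ₖ K j)ᴴ * ((1 : Matrix r r ℂ) ⊗ₖ K j)
      = (1 : Matrix r r ℂ) ⊗ₖ ((K j)ᴴ * K j) := by
    intro j
    rw [one_kron_conjT, ← Matrix.mul_kronecker_mul, Matrix.one_mul]
  rw [Finset.sum_congr rfl (fun j _ => h1 j), ← one_kron_sum, hK, Matrix.one_kronecker_one]

lemma inv_sqrt_mul_self {x : ℝ} (hx : 0 ≤ x) : (Real.sqrt x)⁻¹ * x = Real.sqrt x := by
  rcases eq_or_lt_of_le hx with h|h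
  · rw [← h]; simp
  · have hs : Real.sqrt x ≠ 0 := ne_of_gt (Real.sqrt_pos.mpr h)
    calc (Real.sqrt x)⁻¹ * x = (Real.sqrt x)⁻¹ * (Real.sqrt x * Real.sqrt x) := by
          rw [Real.mul_self_sqrt hx]
      _ = Real.sqrt x := by rw [← mul_assoc, inv_mul_cancel₀ hs, one_mul]

lemma pif_nonneg (x : ℝ) : 0 ≤ Real.sqrt x * (Real.sqrt x)⁻¹ :=
  mul_nonneg (Real.sqrt_nonneg x) (inv_nonneg.mpr (Real.sqrt_nonneg x))

lemma pif_le_one (x : ℝ) : Real.sqrt x * (Real.sqrt x)⁻¹ ≤ 1 := by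
  rcases eq_or_ne (Real.sqrt x) 0 with h|h
  · rw [h]; norm_num
  · rw [mul_inv_cancel₀ h]

lemma self_mul_pif {x : ℝ} (hx : 0 ≤ x) : x * (Real.sqrt x * (Real.sqrt x)⁻¹) = x := by
  rcases eq_or_lt_of_le hx with h|h
  · rw [← h]; simp
  · rw [mul_inv_cancel₀ (ne_of_gt (Real.sqrt_pos.mpr h)), mul_one]

/-- The gentle operator `X` transporting extensions of `ω` to extensions of `σ`. -/
lemma gentle_X {ω σ : Matrix n n ℂ} (hω : ω.PosSemidef) (hω1 : ω.trace = 1)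
    (hσ : σ.PosSemidef) (hσ1 : σ.trace = 1) :
    ∃ (X R : Matrix n n ℂ) (e : ℝ),
      0 ≤ e ∧ e ≤ 1 ∧ traceNorm (ω - σ) = 2 * e ∧
      (1 - Xᴴ * X).PosSemidef ∧
      R.PosSemidef ∧
      X * ω * Xᴴ = σ - R ∧
      1 - e ≤ ((X * ω).trace).re := by
  classical
  have hΔh : (ω - σ).IsHermitian := hω.1.sub hσ.1
  obtain ⟨P, Q, hP, hQ, hPQ, hsumPQ, hdiffPQ⟩ := posneg_decomp hΔh
  set e : ℝ := (Q.trace).re with hedef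
  have he0 : 0 ≤ e := psd_trace_re_nonneg hQ
  have hTrΔ : ((ω - σ).trace).re = 0 := by
    rw [trace_sub, hω1, hσ1]
    simp
  have hPtr : (P.trace).re = e := by
    rw [hedef]; linarith
  have htn : traceNorm (ω - σ) = 2 * e := by
    rw [← hsumPQ, hPtr, hedef]; ring
  have he1 : e ≤ 1 := by
    have h1 : traceNorm (ω - σ) ≤ traceNorm ω + traceNorm σ := traceNorm_sub_le hω.1 hσ.1
    rw [traceNorm_psd hω, traceNorm_psd hσ, hω1, hσ1, htn] at h1
    simp only [Complex.one_re] at h1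
    linarith
  -- the auxiliary operator M = ω + Q ≥ ω, σ
  set Mm : Matrix n n ℂ := ω + Q with hMdef
  have hMpsd : Mm.PosSemidef := hω.add hQ
  have hMσ : Mm - σ = P := by
    calc Mm - σ = (ω - σ) + Q := by rw [hMdef]; abel
      _ = (P - Q) + Q := by rw [hPQ]
      _ = P := by abel
  have hωM : ω = Mm - Q := by rw [hMdef]; abel
  have hMσpsd : (Mm - σ).PosSemidef := by rw [hMσ]; exact hP
  set Nn : Matrix n n ℂ := fc hMpsd.1 (fun x => (Real.sqrt x)⁻¹) with hNdef
  have hNh : Nn.IsHermitian := fc_herm _ _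
  have hNM : Nn * Mm = hMpsd.sqrt := by
    have h1 : Nn * Mm = Nn * fc hMpsd.1 (fun x => x) := by rw [fc_id]
    rw [h1, hNdef, fc_mul, ← fc_sqrt_eq hMpsd]
    exact fc_congr _ (fun i => inv_sqrt_mul_self (hMpsd.eigenvalues_nonneg i))
  set Pi : Matrix n n ℂ := fc hMpsd.1 (fun x => Real.sqrt x * (Real.sqrt x)⁻¹) with hPidef
  have hPih : Pi.IsHermitian := fc_herm _ _
  have hNMN : Nn * Mm * Nn = Pi := by
    rw [hNM, ← fc_sqrt_eq hMpsd, hNdef, fc_mul, hPidef]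
  have hMPi : Mm * Pi = Mm := by
    have h1 : Mm * Pi = fc hMpsd.1 (fun x => x) * Pi := by rw [fc_id]
    rw [h1, hPidef, fc_mul]
    have h2 := fc_congr hMpsd.1 (f := fun x => x * (Real.sqrt x * (Real.sqrt x)⁻¹))
      (g := fun x => x) (fun i => self_mul_pif (hMpsd.eigenvalues_nonneg i))
    rw [h2, fc_id]
  set sσ : Matrix n n ℂ := hσ.sqrt with hsσdef
  have hsσh : sσ.IsHermitian := hσ.posSemidef_sqrt.1
  have hsσ2 : sσ * sσ = σ := hσ.sqrt_mul_self
  -- support : sσ * Pi = sσ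
  have hsupp : sσ * Pi = sσ := by
    set Pr : Matrix n n ℂ := 1 - Pi with hPrdef
    have hPrh : Pr.IsHermitian := isHermitian_one.sub hPih
    have hMPr : Mm * Pr = 0 := by
      rw [hPrdef, Matrix.mul_sub, Matrix.mul_one, hMPi, sub_self]
    have h1 : (Pr * σ * Pr).PosSemidef := by
      have := hσ.mul_mul_conjTranspose_same Pr
      rwa [hPrh.eq] at this
    have h2 : (Pr * P * Pr).PosSemidef := by
      have := hP.mul_mul_conjTranspose_same Pr
      rwa [hPrh.eq] at this
    have hsplit : Pr * σ * Pr + Pr * P * Pr = 0 := by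
      have h3 : Pr * σ * Pr + Pr * P * Pr = Pr * Mm * Pr := by
        rw [← hMσ]
        noncomm_ring
      rw [h3, Matrix.mul_assoc, hMPr, Matrix.mul_zero]
    have h4 : ((Pr * σ * Pr).trace).re = 0 := by
      have h5 := congrArg (fun z => (Matrix.trace z).re) hsplit
      simp only [trace_add, Complex.add_re, trace_zero, Complex.zero_re] at h5
      have h6 := psd_trace_re_nonneg h1
      have h7 := psd_trace_re_nonneg h2
      linarith
    have h8 : Pr * σ * Pr = 0 := psd_eq_zero_of_trace_zero h1 h4
    have h9 : (sσ * Pr)ᴴ * (sσ * Pr) = Pr * σ * Pr := by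
      rw [conjTranspose_mul, hPrh.eq, hsσh.eq]
      calc Pr * sσ * (sσ * Pr) = Pr * (sσ * sσ) * Pr := by noncomm_ring
        _ = Pr * σ * Pr := by rw [hsσ2]
    have h10 : sσ * Pr = 0 := by
      rw [← Matrix.conjTranspose_mul_self_eq_zero, h9, h8]
    have h11 : sσ * (1 - Pi) = 0 := by rw [← hPrdef, h10]
    rw [Matrix.mul_sub, Matrix.mul_one, sub_eq_zero] at h11
    exact h11.symm
  -- the operator X and remainder R
  have hXH : (sσ * Nn)ᴴ = Nn * sσ := by rw [conjTranspose_mul, hNh.eq, hsσh.eq]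
  have hXX : (sσ * Nn)ᴴ * (sσ * Nn) = Nn * σ * Nn := by
    rw [hXH]
    calc Nn * sσ * (sσ * Nn) = Nn * (sσ * sσ) * Nn := by noncomm_ring
      _ = Nn * σ * Nn := by rw [hsσ2]
  have hcontr : ((1 : Matrix n n ℂ) - (sσ * Nn)ᴴ * (sσ * Nn)).PosSemidef := by
    rw [hXX]
    have h1 : ((1 : Matrix n n ℂ) - Pi).PosSemidef := by
      have h2 : (1 : Matrix n n ℂ) - Pi
          = fc hMpsd.1 (fun x => 1 - Real.sqrt x * (Real.sqrt x)⁻¹) := by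
        rw [hPidef, ← fc_sub, fc_one]
      rw [h2]
      exact fc_psd _ (fun x => by linarith [pif_le_one x])
    have h3 : (Nn * P * Nn).PosSemidef := by
      have := hP.mul_mul_conjTranspose_same Nn
      rwa [hNh.eq] at this
    have h4 : (1 : Matrix n n ℂ) - Nn * σ * Nn = ((1 : Matrix n n ℂ) - Pi) + Nn * P * Nn := by
      rw [← hNMN, ← hMσ]
      noncomm_ring
    rw [h4]
    exact h1.add h3
  have hRpsd : (sσ * (Nn * Q * Nn) * sσ).PosSemidef := by
    have h1 : (Nn * Q * Nn).PosSemidef := by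
      have := hQ.mul_mul_conjTranspose_same Nn
      rwa [hNh.eq] at this
    have := h1.mul_mul_conjTranspose_same sσ
    rwa [hsσh.eq] at this
  have hXωX : (sσ * Nn) * ω * (sσ * Nn)ᴴ = σ - sσ * (Nn * Q * Nn) * sσ := by
    rw [hXH]
    have h2 : Nn * (Mm - Q) * Nn = Pi - Nn * Q * Nn := by
      rw [← hNMN]
      noncomm_ring
    calc sσ * Nn * ω * (Nn * sσ) = sσ * (Nn * ω * Nn) * sσ := by noncomm_ring
      _ = sσ * (Pi - Nn * Q * Nn) * sσ := by rw [hωM, h2]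
      _ = sσ * Pi * sσ - sσ * (Nn * Q * Nn) * sσ := by noncomm_ring
      _ = σ - sσ * (Nn * Q * Nn) * sσ := by rw [hsupp, hsσ2]
  -- trace lower bound
  have hXM : sσ * Nn * Mm = sσ * hMpsd.sqrt := by
    rw [Matrix.mul_assoc, hNM]
  have h1 : (σ.trace).re ≤ ((sσ * hMpsd.sqrt).trace).re := trace_sqrt_mono hσ hMpsd hMσpsd
  set q2 : Matrix n n ℂ := hQ.sqrt with hq2def
  have hq2h : q2.IsHermitian := hQ.posSemidef_sqrt.1
  have hq22 : q2 * q2 = Q := hQ.sqrt_mul_self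
  have habs : ‖((sσ * Nn) * Q).trace‖ ≤ e := by
    have hform : (sσ * Nn) * Q = ((q2 * (sσ * Nn)ᴴ)ᴴ) * q2 := by
      rw [conjTranspose_mul, conjTranspose_conjTranspose, hq2h.eq]
      calc (sσ * Nn) * Q = (sσ * Nn) * (q2 * q2) := by rw [hq22]
        _ = (sσ * Nn) * q2 * q2 := by noncomm_ring
    rw [hform]
    have hcs := frob_cs (q2 * (sσ * Nn)ᴴ) q2
    have hA2 : (((q2 * (sσ * Nn)ᴴ)ᴴ * (q2 * (sσ * Nn)ᴴ)).trace).re ≤ e := by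
      have hform2 : (q2 * (sσ * Nn)ᴴ)ᴴ * (q2 * (sσ * Nn)ᴴ)
          = (sσ * Nn) * Q * (sσ * Nn)ᴴ := by
        rw [conjTranspose_mul, conjTranspose_conjTranspose, hq2h.eq, ← hq22]
        noncomm_ring
      rw [hform2]
      have hcyc : ((sσ * Nn) * Q * (sσ * Nn)ᴴ).trace
          = (Q * ((sσ * Nn)ᴴ * (sσ * Nn))).trace := by
        calc ((sσ * Nn) * Q * (sσ * Nn)ᴴ).trace
            = ((sσ * Nn)ᴴ * ((sσ * Nn) * Q)).trace := by rw [trace_mul_comm]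
          _ = (((sσ * Nn)ᴴ * (sσ * Nn)) * Q).trace := by rw [← Matrix.mul_assoc]
          _ = (Q * ((sσ * Nn)ᴴ * (sσ * Nn))).trace := by rw [trace_mul_comm]
      rw [hcyc]
      exact trace_mul_contraction_le hQ hcontr
    have hB2 : ((q2ᴴ * q2).trace).re = e := by
      rw [hq2h.eq, hq22]
    have hA2' : Real.sqrt ((((q2 * (sσ * Nn)ᴴ)ᴴ * (q2 * (sσ * Nn)ᴴ)).trace).re)
        ≤ Real.sqrt e := Real.sqrt_le_sqrt hA2
    calc ‖((q2 * (sσ * Nn)ᴴ)ᴴ * q2).trace‖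
        ≤ Real.sqrt ((((q2 * (sσ * Nn)ᴴ)ᴴ * (q2 * (sσ * Nn)ᴴ)).trace).re)
          * Real.sqrt (((q2ᴴ * q2).trace).re) := hcs
      _ ≤ Real.sqrt e * Real.sqrt e := by
          rw [hB2]
          exact mul_le_mul_of_nonneg_right hA2' (Real.sqrt_nonneg _)
      _ = e := Real.mul_self_sqrt he0
  have hfin : 1 - e ≤ (((sσ * Nn) * ω).trace).re := by
    have hXω : (sσ * Nn) * ω = (sσ * Nn) * Mm - (sσ * Nn) * Q := by
      rw [hωM, Matrix.mul_sub]
    have htr : (((sσ * Nn) * ω).trace).re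
        = ((sσ * hMpsd.sqrt).trace).re - (((sσ * Nn) * Q).trace).re := by
      rw [hXω, trace_sub, Complex.sub_re, hXM]
    have h2 : (((sσ * Nn) * Q).trace).re ≤ e := le_trans (Complex.re_le_norm _) habs
    have h3 : (σ.trace).re = 1 := by rw [hσ1]; simp
    rw [htr]
    linarith
  exact ⟨sσ * Nn, sσ * (Nn * Q * Nn) * sσ, e, he0, he1, htn, hcontr, hRpsd, hXωX, hfin⟩

end CAux

open CAux Matrix in
theorem cdist_continuity {ι κ a b : Type*} [Fintype ι] [Fintype κ]
    [Fintype a] [DecidableEq a] [Fintype b] [DecidableEq b]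
    (M : ι → Matrix b a ℂ) (N : κ → Matrix b a ℂ)
    (hM : ∑ i, (M i)ᴴ * M i = 1) (hN : ∑ i, (N i)ᴴ * N i = 1)
    (ω σ : Matrix a a ℂ) (hω : ω.PosSemidef) (hω1 : ω.trace = 1)
    (hσ : σ.PosSemidef) (hσ1 : σ.trace = 1) :
    cdist M N ω ≤ cdist M N σ + 4 * Real.sqrt (traceNorm (ω - σ)) := by
  classical
  obtain ⟨X, R, e, he0, he1, htn, hcontr, hRpsd, hXωX, hure⟩ := gentle_X hω hω1 hσ hσ1
  rw [htn]
  -- the σ-extension set is bounded above by 2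
  have hbdd : BddAbove {r | ∃ (m : ℕ) (x : Matrix (Fin m × a) (Fin m × a) ℂ),
      x.PosSemidef ∧ x.trace = 1 ∧ ptraceL x = σ ∧
      r = traceNorm (krausApply (fun j => (1 : Matrix (Fin m) (Fin m) ℂ) ⊗ₖ M j) x
        - krausApply (fun j => (1 : Matrix (Fin m) (Fin m) ℂ) ⊗ₖ N j) x)} := by
    refine ⟨2, fun r hr => ?_⟩
    obtain ⟨m, x, hx, hx1, hxσ, rfl⟩ := hr
    have hMtp := one_kron_kraus_sum (r := Fin m) M hM
    have hNtp := one_kron_kraus_sum (r := Fin m) N hN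
    have h1 := traceNorm_psd_sub_le
      (krausApply_psd (fun j => (1 : Matrix (Fin m) (Fin m) ℂ) ⊗ₖ M j) hx)
      (krausApply_psd (fun j => (1 : Matrix (Fin m) (Fin m) ℂ) ⊗ₖ N j) hx)
    rw [krausApply_trace _ hMtp, krausApply_trace _ hNtp, hx1] at h1
    norm_num at h1
    linarith
  -- cdist σ is nonnegative
  have hσ0 : 0 ≤ cdist M N σ := by
    have hx0psd : ((1 : Matrix (Fin 1) (Fin 1) ℂ) ⊗ₖ σ).PosSemidef := one_kron_psd hσ
    have hmem : traceNorm
        (krausApply (fun j => (1 : Matrix (Fin 1) (Fin 1) ℂ) ⊗ₖ M j)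
            ((1 : Matrix (Fin 1) (Fin 1) ℂ) ⊗ₖ σ)
          - krausApply (fun j => (1 : Matrix (Fin 1) (Fin 1) ℂ) ⊗ₖ N j)
            ((1 : Matrix (Fin 1) (Fin 1) ℂ) ⊗ₖ σ)) ∈ {r | ∃ (m : ℕ)
        (x : Matrix (Fin m × a) (Fin m × a) ℂ),
        x.PosSemidef ∧ x.trace = 1 ∧ ptraceL x = σ ∧
        r = traceNorm (krausApply (fun j => (1 : Matrix (Fin m) (Fin m) ℂ) ⊗ₖ M j) x
          - krausApply (fun j => (1 : Matrix (Fin m) (Fin m) ℂ) ⊗ₖ N j) x)} := by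
      refine ⟨1, (1 : Matrix (Fin 1) (Fin 1) ℂ) ⊗ₖ σ, hx0psd, ?_, ?_, rfl⟩
      · rw [Matrix.trace_kronecker, hσ1, Matrix.trace_one]
        simp
      · rw [ptraceL_one_kron]
        simp
    exact le_trans (traceNorm_nonneg _) (le_csSup hbdd hmem)
  have hrhs0 : 0 ≤ cdist M N σ + 4 * Real.sqrt (2 * e) := by
    have h4 : 0 ≤ 4 * Real.sqrt (2 * e) := by positivity
    linarith
  unfold cdist
  apply Real.sSup_le _ hrhs0
  rintro r ⟨m, x, hx, hx1, hxω, rfl⟩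
  have hm : m ≠ 0 := by
    rintro rfl
    haveI : IsEmpty (Fin 0 × a) := ⟨fun p => Fin.elim0 p.1⟩
    rw [Matrix.trace_eq_zero_of_isEmpty] at hx1
    exact zero_ne_one hx1
  have hmC : (((m : ℝ)⁻¹ : ℝ) : ℂ) * (Fintype.card (Fin m) : ℂ) = 1 := by
    rw [Fintype.card_fin]
    push_cast
    rw [inv_mul_cancel₀]
    exact_mod_cast Nat.cast_ne_zero.mpr hm
  -- the big-space operators
  set Y : Matrix (Fin m × a) (Fin m × a) ℂ := (1 : Matrix (Fin m) (Fin m) ℂ) ⊗ₖ X with hYdef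
  have hYH : Yᴴ = (1 : Matrix (Fin m) (Fin m) ℂ) ⊗ₖ Xᴴ := by rw [hYdef, one_kron_conjT]
  have hYY : Yᴴ * Y = (1 : Matrix (Fin m) (Fin m) ℂ) ⊗ₖ (Xᴴ * X) := by
    rw [hYH, hYdef, ← Matrix.mul_kronecker_mul, Matrix.one_mul]
  set KR : Matrix (Fin m × a) (Fin m × a) ℂ
    := (((m : ℝ)⁻¹ : ℝ) : ℂ) • ((1 : Matrix (Fin m) (Fin m) ℂ) ⊗ₖ R) with hKRdef
  have hKRpsd : KR.PosSemidef := psd_smul_real (by positivity) (one_kron_psd hRpsd)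
  set x' : Matrix (Fin m × a) (Fin m × a) ℂ := Y * x * Yᴴ + KR with hx'def
  have hYxYpsd : (Y * x * Yᴴ).PosSemidef := hx.mul_mul_conjTranspose_same Y
  have hx'psd : x'.PosSemidef := hYxYpsd.add hKRpsd
  -- traces
  have htYxY : (Y * x * Yᴴ).trace = ((Xᴴ * X) * ω).trace := by
    calc (Y * x * Yᴴ).trace = (Yᴴ * (Y * x)).trace := by rw [trace_mul_comm]
      _ = ((Yᴴ * Y) * x).trace := by rw [Matrix.mul_assoc]
      _ = ((Xᴴ * X) * ptraceL x).trace := by rw [hYY, trace_one_kron_mul]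
      _ = ((Xᴴ * X) * ω).trace := by rw [hxω]
  have hXXω : ((Xᴴ * X) * ω).trace = (X * ω * Xᴴ).trace := by
    rw [trace_mul_cycle (X) (ω) (Xᴴ)]
  have htKR : KR.trace = R.trace := by
    rw [hKRdef, trace_smul, Matrix.trace_kronecker, Matrix.trace_one, smul_eq_mul,
      ← mul_assoc, hmC, one_mul]
  have hRtrace : R.trace = σ.trace - (X * ω * Xᴴ).trace := by
    have h := congrArg Matrix.trace hXωX
    rw [trace_sub] at h
    rw [h]
    ring
  have htx' : x'.trace = 1 := by
    rw [hx'def, trace_add, htKR, hRtrace, htYxY, hXXω, hσ1]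
    abel
  -- partial trace
  have hptr : ptraceL x' = σ := by
    rw [hx'def, ptraceL_add, hKRdef, ptraceL_smul, ptraceL_one_kron, smul_smul, hmC, one_smul]
    rw [hYdef, ptraceL_conj, hxω, hXωX]
    abel
  -- middle term is at most cdist σ
  have hmid : traceNorm (krausApply (fun j => (1 : Matrix (Fin m) (Fin m) ℂ) ⊗ₖ M j) x'
      - krausApply (fun j => (1 : Matrix (Fin m) (Fin m) ℂ) ⊗ₖ N j) x') ≤ cdist M N σ :=
    le_csSup hbdd ⟨m, x', hx'psd, htx', hptr, rfl⟩
  -- Kraus maps are trace norm contractions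
  have hMtp := one_kron_kraus_sum (r := Fin m) M hM
  have hNtp := one_kron_kraus_sum (r := Fin m) N hN
  have hxx'h : (x - x').IsHermitian := hx.1.sub hx'psd.1
  have hΦM : traceNorm (krausApply (fun j => (1 : Matrix (Fin m) (Fin m) ℂ) ⊗ₖ M j) x
      - krausApply (fun j => (1 : Matrix (Fin m) (Fin m) ℂ) ⊗ₖ M j) x')
      ≤ traceNorm (x - x') := by
    rw [← krausApply_sub]
    exact kraus_traceNorm_le _ hMtp hxx'h
  have hΦN : traceNorm (krausApply (fun j => (1 : Matrix (Fin m) (Fin m) ℂ) ⊗ₖ N j) x'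
      - krausApply (fun j => (1 : Matrix (Fin m) (Fin m) ℂ) ⊗ₖ N j) x)
      ≤ traceNorm (x - x') := by
    rw [← krausApply_sub]
    have h1 := kraus_traceNorm_le (fun j => (1 : Matrix (Fin m) (Fin m) ℂ) ⊗ₖ N j) hNtp
      (hx'psd.1.sub hx.1)
    have h2 : traceNorm (x' - x) = traceNorm (x - x') := by
      have h3 : x' - x = -(x - x') := by abel
      rw [h3, traceNorm_neg]
    rwa [h2] at h1
  -- quantities
  set tC : ℂ := (Y * x).trace with htCdef
  have htω : tC = (X * ω).trace := by
    rw [htCdef, hYdef, trace_one_kron_mul, hxω]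
  have hte : 1 - e ≤ tC.re := by rw [htω]; exact hure
  set sC : ℂ := (Y * x * Yᴴ).trace with hsCdef
  have hs0 : 0 ≤ sC.re := psd_trace_re_nonneg hYxYpsd
  have hs1 : sC.re ≤ 1 := by
    have h1 : (ω * (Xᴴ * X)).trace.re ≤ ω.trace.re := trace_mul_contraction_le hω hcontr
    rw [htYxY, trace_mul_comm]
    rw [hω1] at h1
    simpa using h1
  set G : Matrix (Fin m × a) (Fin m × a) ℂ := (1 - Y) * x * (1 - Y)ᴴ with hGdef
  have hGpsd : G.PosSemidef := hx.mul_mul_conjTranspose_same _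
  set g : ℝ := G.trace.re with hgdef
  have hg0 : 0 ≤ g := psd_trace_re_nonneg hGpsd
  have h1Y : (1 - Y)ᴴ = 1 - Yᴴ := by rw [conjTranspose_sub, conjTranspose_one]
  have hgval : g = 1 - 2 * tC.re + sC.re := by
    have hexp : G = x - Y * x - x * Yᴴ + Y * x * Yᴴ := by
      rw [hGdef, h1Y]
      noncomm_ring
    have hxYH : (x * Yᴴ).trace = star ((Y * x).trace) := by
      rw [← trace_conjTranspose, conjTranspose_mul, hx.1.eq]
    have htrace : G.trace
        = x.trace - (Y * x).trace - star ((Y * x).trace) + (Y * x * Yᴴ).trace := by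
      rw [hexp, trace_add, trace_sub, trace_sub, hxYH]
    have h2 := congrArg Complex.re htrace
    rw [hx1] at h2
    rw [hgdef, h2, ← htCdef, ← hsCdef, Complex.add_re, Complex.sub_re, Complex.sub_re,
      Complex.one_re, Complex.star_def, Complex.conj_re]
    ring
  have hgle : g ≤ 2 * e - (1 - sC.re) := by
    rw [hgval]
    linarith
  -- trace-norm bound on x - x'
  have hcore : traceNorm (x - x') ≤ 2 * Real.sqrt (2 * e) := by
    obtain ⟨W, hWh, hWc, hWt⟩ := exists_dual_sign hxx'h
    have hWWc : ((1 : Matrix (Fin m × a) (Fin m × a) ℂ) - W * Wᴴ).PosSemidef := by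
      have h1 : W * Wᴴ = Wᴴ * W := by rw [hWh.eq]
      rwa [h1]
    set xhlf : Matrix (Fin m × a) (Fin m × a) ℂ := hx.sqrt with hxhlfdef
    have hxhlfh : xhlf.IsHermitian := hx.posSemidef_sqrt.1
    have hxhlf2 : xhlf * xhlf = x := hx.sqrt_mul_self
    -- term 1
    set A1 : Matrix (Fin m × a) (Fin m × a) ℂ := xhlf * (1 - Y)ᴴ with hA1def
    set B1 : Matrix (Fin m × a) (Fin m × a) ℂ := xhlf * W with hB1def
    have hT1form : (1 - Y) * x * W = A1ᴴ * B1 := by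
      rw [hA1def, hB1def, conjTranspose_mul, conjTranspose_conjTranspose, hxhlfh.eq, ← hxhlf2]
      noncomm_ring
    have hA1A : A1ᴴ * A1 = G := by
      rw [hA1def, conjTranspose_mul, conjTranspose_conjTranspose, hxhlfh.eq, hGdef, ← hxhlf2]
      noncomm_ring
    have hB1B : (B1ᴴ * B1).trace.re ≤ 1 := by
      have hform : B1ᴴ * B1 = Wᴴ * x * W := by
        rw [hB1def, conjTranspose_mul, hxhlfh.eq, ← hxhlf2]
        noncomm_ring
      have hcyc : (Wᴴ * x * W).trace = (x * (W * Wᴴ)).trace := by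
        calc (Wᴴ * x * W).trace = (W * Wᴴ * x).trace := trace_mul_cycle Wᴴ x W
          _ = (x * (W * Wᴴ)).trace := by rw [trace_mul_comm]
      have h2 := trace_mul_contraction_le hx hWWc
      rw [hx1] at h2
      rw [hform, hcyc]
      simpa using h2
    have hT1 : ‖((1 - Y) * x * W).trace‖ ≤ Real.sqrt g := by
      rw [hT1form]
      have hcs := frob_cs A1 B1
      have hA1' : Real.sqrt ((A1ᴴ * A1).trace.re) = Real.sqrt g := by rw [hA1A, hgdef]
      calc ‖(A1ᴴ * B1).trace‖
          ≤ Real.sqrt ((A1ᴴ * A1).trace.re) * Real.sqrt ((B1ᴴ * B1).trace.re) := hcs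
        _ ≤ Real.sqrt g * 1 := by
            rw [hA1']
            have := Real.sqrt_le_sqrt hB1B
            rw [Real.sqrt_one] at this
            exact mul_le_mul_of_nonneg_left this (Real.sqrt_nonneg _)
        _ = Real.sqrt g := mul_one _
    -- term 2
    set A2 : Matrix (Fin m × a) (Fin m × a) ℂ := xhlf * Yᴴ with hA2def
    set B2 : Matrix (Fin m × a) (Fin m × a) ℂ := xhlf * ((1 - Y)ᴴ * W) with hB2def
    have hT2form : Y * x * ((1 - Y)ᴴ * W) = A2ᴴ * B2 := by
      rw [hA2def, hB2def, conjTranspose_mul, conjTranspose_conjTranspose, hxhlfh.eq, ← hxhlf2]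
      noncomm_ring
    have hA2A : (A2ᴴ * A2).trace.re = sC.re := by
      have hform : A2ᴴ * A2 = Y * x * Yᴴ := by
        rw [hA2def, conjTranspose_mul, conjTranspose_conjTranspose, hxhlfh.eq, ← hxhlf2]
        noncomm_ring
      rw [hform, hsCdef]
    have hB2B : (B2ᴴ * B2).trace.re ≤ g := by
      have hform : B2ᴴ * B2 = Wᴴ * G * W := by
        rw [hB2def, conjTranspose_mul, conjTranspose_mul, conjTranspose_conjTranspose,
          hxhlfh.eq, hGdef, ← hxhlf2]
        noncomm_ring
      have hcyc : (Wᴴ * G * W).trace = (G * (W * Wᴴ)).trace := by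
        calc (Wᴴ * G * W).trace = (W * Wᴴ * G).trace := trace_mul_cycle Wᴴ G W
          _ = (G * (W * Wᴴ)).trace := by rw [trace_mul_comm]
      rw [hform, hcyc, hgdef]
      exact trace_mul_contraction_le hGpsd hWWc
    have hT2 : ‖(Y * x * ((1 - Y)ᴴ * W)).trace‖
        ≤ Real.sqrt (sC.re) * Real.sqrt g := by
      rw [hT2form]
      calc ‖(A2ᴴ * B2).trace‖
          ≤ Real.sqrt ((A2ᴴ * A2).trace.re) * Real.sqrt ((B2ᴴ * B2).trace.re) := frob_cs A2 B2
        _ ≤ Real.sqrt (sC.re) * Real.sqrt g := by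
            rw [hA2A]
            exact mul_le_mul_of_nonneg_left (Real.sqrt_le_sqrt hB2B) (Real.sqrt_nonneg _)
    -- term 3
    have hT3 : ‖(KR * W).trace‖ ≤ 1 - sC.re := by
      have h1 := trace_mul_contraction_abs_le hKRpsd.1 hWc
      rw [traceNorm_psd hKRpsd, htKR, hRtrace] at h1
      have h2 : (σ.trace - (X * ω * Xᴴ).trace).re = 1 - sC.re := by
        rw [Complex.sub_re, hσ1, htYxY, hXXω]
        simp
      rwa [h2] at h1
    -- assemble
    have hsplit : (x - x') * W = (1 - Y) * x * W + Y * x * ((1 - Y)ᴴ * W) - KR * W := by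
      rw [hx'def, h1Y]
      noncomm_ring
    have htr : traceNorm (x - x') = (((x - x') * W).trace).re := by
      rw [hWt, Complex.ofReal_re]
    have hre : (((x - x') * W).trace).re
        ≤ Real.sqrt g + Real.sqrt (sC.re) * Real.sqrt g + (1 - sC.re) := by
      rw [hsplit, trace_sub, trace_add]
      have habs1 : (((1 - Y) * x * W).trace + (Y * x * ((1 - Y)ᴴ * W)).trace
          - (KR * W).trace).re ≤ ‖((1 - Y) * x * W).trace‖
          + ‖(Y * x * ((1 - Y)ᴴ * W)).trace‖ + ‖(KR * W).trace‖ := by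
        have h1 := Complex.re_le_norm (((1 - Y) * x * W).trace
          + (Y * x * ((1 - Y)ᴴ * W)).trace - (KR * W).trace)
        have h2 := norm_sub_le (((1 - Y) * x * W).trace
          + (Y * x * ((1 - Y)ᴴ * W)).trace) ((KR * W).trace)
        have h3 := norm_add_le (((1 - Y) * x * W).trace)
          ((Y * x * ((1 - Y)ᴴ * W)).trace)
        linarith
      linarith [hT1, hT2, hT3, habs1]
    have hkey := key_scalar hg0 hs0 hs1 he1 hgle
    calc traceNorm (x - x') ≤ Real.sqrt g + Real.sqrt (sC.re) * Real.sqrt g + (1 - sC.re) := by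
          rw [htr]; exact hre
      _ = Real.sqrt g * (1 + Real.sqrt (sC.re)) + (1 - sC.re) := by ring
      _ ≤ 2 * Real.sqrt (2 * e) := hkey
  -- final assembly
  have htri := traceNorm_triangle3
    (A := krausApply (fun j => (1 : Matrix (Fin m) (Fin m) ℂ) ⊗ₖ M j) x)
    (B := krausApply (fun j => (1 : Matrix (Fin m) (Fin m) ℂ) ⊗ₖ N j) x)
    (C := krausApply (fun j => (1 : Matrix (Fin m) (Fin m) ℂ) ⊗ₖ M j) x')
    (krausApply_herm _ hx.1) (krausApply_herm _ hx.1) (krausApply_herm _ hx'psd.1)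
  have htri2 := traceNorm_triangle3
    (A := krausApply (fun j => (1 : Matrix (Fin m) (Fin m) ℂ) ⊗ₖ M j) x')
    (B := krausApply (fun j => (1 : Matrix (Fin m) (Fin m) ℂ) ⊗ₖ N j) x)
    (C := krausApply (fun j => (1 : Matrix (Fin m) (Fin m) ℂ) ⊗ₖ N j) x')
    (krausApply_herm _ hx'psd.1) (krausApply_herm _ hx.1) (krausApply_herm _ hx'psd.1)
  linarith [hΦM, hΦN, hmid, hcore, htri, htri2]
end
end
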